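/- Let S ⊆ ℝ² be an open set and let u : ℝ² → ℝ³ be smooth on S with ∂₁u(x) and ∂₂u(x) linearly independent at every x ∈ S. Define g_{ij} = ∂ᵢu·∂ⱼu with inverse matrix (g^{ij}), n = (∂₁u × ∂₂u)/|∂₁u × ∂₂u|, h_{ij} = n·∂ᵢ∂ⱼu and Γ^k_{ij} = ½ g^{kl}(∂ⱼg_{il} + ∂ᵢg_{jl} − ∂_l g_{ij}). Let Ω, τ : S → ℝ³ be smooth with ∂_k τ = Ω × ∂_k u on S for k = 1, 2. Then for all i, j ∈ {1,2}, on S: ∂ᵢ∂ⱼτ − Γ^k_{ij}∂_k τ = ∂ᵢΩ × ∂ⱼu + h_{ij}·(Ω × n). -/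

import Mathlib

open Matrix Set

noncomputable section

/-- The `i`-th partial derivative of a map `ℝ² → ℝ³`. -/
def pdv (i : Fin 2) (f : (Fin 2 → ℝ) → (Fin 3 → ℝ)) (x : Fin 2 → ℝ) : Fin 3 → ℝ :=
  fderiv ℝ f x (Pi.single i 1)

/-- The `i`-th partial derivative of a scalar function on `ℝ²`. -/
def pds (i : Fin 2) (f : (Fin 2 → ℝ) → ℝ) (x : Fin 2 → ℝ) : ℝ :=
  fderiv ℝ f x (Pi.single i 1)

/-- Euclidean norm on `ℝ³`. -/
def norm3 (a : Fin 3 → ℝ) : ℝ := Real.sqrt (a ⬝ᵥ a)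

/-- The induced metric `g_{ij} = ∂ᵢu·∂ⱼu` of `u`. -/
def gmat (u : (Fin 2 → ℝ) → (Fin 3 → ℝ)) (x : Fin 2 → ℝ) : Matrix (Fin 2) (Fin 2) ℝ :=
  Matrix.of fun i j => pdv i u x ⬝ᵥ pdv j u x

/-- The inverse metric `(g^{ij})`. -/
def ginv (u : (Fin 2 → ℝ) → (Fin 3 → ℝ)) (x : Fin 2 → ℝ) : Matrix (Fin 2) (Fin 2) ℝ :=
  (gmat u x)⁻¹

/-- The unit normal `n = (∂₁u × ∂₂u)/|∂₁u × ∂₂u|` of `u`. -/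
def nrm (u : (Fin 2 → ℝ) → (Fin 3 → ℝ)) (x : Fin 2 → ℝ) : Fin 3 → ℝ :=
  (norm3 (pdv 0 u x ⨯₃ pdv 1 u x))⁻¹ • (pdv 0 u x ⨯₃ pdv 1 u x)

/-- The second fundamental form `h_{ij} = n·∂ᵢ∂ⱼu` of `u`. -/
def sff (u : (Fin 2 → ℝ) → (Fin 3 → ℝ)) (x : Fin 2 → ℝ) (i j : Fin 2) : ℝ :=
  nrm u x ⬝ᵥ pdv i (pdv j u) x

/-- The Christoffel symbols `Γ^k_{ij} = ½ g^{kl}(∂ⱼg_{il} + ∂ᵢg_{jl} − ∂_l g_{ij})` of `u`. -/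
def Gam (u : (Fin 2 → ℝ) → (Fin 3 → ℝ)) (x : Fin 2 → ℝ) (k i j : Fin 2) : ℝ :=
  (1/2) * ∑ l, ginv u x k l *
    (pds j (fun y => gmat u y i l) x + pds i (fun y => gmat u y j l) x
      - pds l (fun y => gmat u y i j) x)

section aux
variable {f g : (Fin 2 → ℝ) → (Fin 3 → ℝ)} {x : Fin 2 → ℝ} {i : Fin 2}

lemma diffAt_comp (hf : DifferentiableAt ℝ f x) (c : Fin 3) :
    DifferentiableAt ℝ (fun y => f y c) x :=
  ((ContinuousLinearMap.proj c : (Fin 3 → ℝ) →L[ℝ] ℝ).differentiableAt).comp x hf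

lemma pdv_app (hf : DifferentiableAt ℝ f x) (c : Fin 3) :
    pdv i f x c = pds i (fun y => f y c) x := by
  have h : ∀ c : Fin 3, DifferentiableAt ℝ (fun y => f y c) x := diffAt_comp hf
  rw [pdv, fderiv_pi h]
  rfl

lemma pds_mul {p q : (Fin 2 → ℝ) → ℝ} (hp : DifferentiableAt ℝ p x)
    (hq : DifferentiableAt ℝ q x) :
    pds i (fun y => p y * q y) x = pds i p x * q x + p x * pds i q x := by
  simp [pds, fderiv_fun_mul hp hq]; ring

lemma pds_dot (hf : DifferentiableAt ℝ f x) (hg : DifferentiableAt ℝ g x) :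
    pds i (fun y => f y ⬝ᵥ g y) x = pdv i f x ⬝ᵥ g x + f x ⬝ᵥ pdv i g x := by
  have hfc := diffAt_comp hf
  have hgc := diffAt_comp hg
  have : (fun y => f y ⬝ᵥ g y) = fun y => ∑ c, f y c * g y c := by
    funext y; simp [dotProduct]
  rw [this, pds, fderiv_fun_sum (fun c _ => ((hfc c).fun_mul (hgc c)))]
  simp only [ContinuousLinearMap.coe_sum', Finset.sum_apply]
  rw [dotProduct, dotProduct, ← Finset.sum_add_distrib]
  congr 1; funext c
  rw [← pds, pds_mul (hfc c) (hgc c), pdv_app hf, pdv_app hg]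

lemma diffAt_cross (hf : DifferentiableAt ℝ f x) (hg : DifferentiableAt ℝ g x) :
    DifferentiableAt ℝ (fun y => f y ⨯₃ g y) x := by
  have hfc := diffAt_comp hf
  have hgc := diffAt_comp hg
  have : (fun y => f y ⨯₃ g y) = fun y (c : Fin 3) =>
      ![f y 1 * g y 2 - f y 2 * g y 1, f y 2 * g y 0 - f y 0 * g y 2,
        f y 0 * g y 1 - f y 1 * g y 0] c := by
    funext y; rw [cross_apply]
  rw [this]
  apply differentiableAt_pi.2
  intro c
  fin_cases c <;> simp <;>
    exact DifferentiableAt.sub (DifferentiableAt.mul (hfc _) (hgc _))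
      (DifferentiableAt.mul (hfc _) (hgc _))

lemma pds_sub {p q : (Fin 2 → ℝ) → ℝ} (hp : DifferentiableAt ℝ p x)
    (hq : DifferentiableAt ℝ q x) :
    pds i (fun y => p y - q y) x = pds i p x - pds i q x := by
  simp [pds, fderiv_fun_sub hp hq]

lemma pdv_cross (hf : DifferentiableAt ℝ f x) (hg : DifferentiableAt ℝ g x) :
    pdv i (fun y => f y ⨯₃ g y) x = pdv i f x ⨯₃ g x + f x ⨯₃ pdv i g x := by
  have hfc := diffAt_comp hf
  have hgc := diffAt_comp hg
  have key : ∀ p q r s : Fin 3, pds i (fun y => f y p * g y q - f y r * g y s) x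
      = pds i (fun y => f y p) x * g x q + f x p * pds i (fun y => g y q) x
        - (pds i (fun y => f y r) x * g x s + f x r * pds i (fun y => g y s) x) := by
    intro p q r s
    rw [pds_sub ((hfc p).fun_mul (hgc q)) ((hfc r).fun_mul (hgc s)), pds_mul (hfc p) (hgc q),
      pds_mul (hfc r) (hgc s)]
  funext c
  rw [pdv_app (diffAt_cross hf hg)]
  fin_cases c <;>
    simp [cross_apply, pdv_app hf, pdv_app hg] <;>
    rw [key] <;> ring

end aux

section aux2
variable {S : Set (Fin 2 → ℝ)} {u : (Fin 2 → ℝ) → (Fin 3 → ℝ)} {x : Fin 2 → ℝ}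

lemma contDiffOn_pdv (hS : IsOpen S) (hu : ContDiffOn ℝ (⊤ : ℕ∞) u S) (k : Fin 2) :
    ContDiffOn ℝ (⊤ : ℕ∞) (pdv k u) S := by
  have h1 : ContDiffOn ℝ (⊤ : ℕ∞) (fderivWithin ℝ u S) S :=
    hu.fderivWithin hS.uniqueDiffOn (by simp)
  have h2 : ContDiffOn ℝ (⊤ : ℕ∞) (fun y => fderivWithin ℝ u S y (Pi.single k 1)) S :=
    h1.clm_apply contDiffOn_const
  exact h2.congr fun y hy => by rw [pdv, ← fderivWithin_of_isOpen hS hy]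

lemma diffAt_of_contDiffOn {F : Type*} [NormedAddCommGroup F] [NormedSpace ℝ F]
    {f : (Fin 2 → ℝ) → F} (hS : IsOpen S) (hf : ContDiffOn ℝ (⊤ : ℕ∞) f S) (hx : x ∈ S) :
    DifferentiableAt ℝ f x :=
  (hf.contDiffAt (hS.mem_nhds hx)).differentiableAt (by simp)

lemma diffAt_pdv (hS : IsOpen S) (hu : ContDiffOn ℝ (⊤ : ℕ∞) u S) (hx : x ∈ S) (k : Fin 2) :
    DifferentiableAt ℝ (pdv k u) x :=
  diffAt_of_contDiffOn hS (contDiffOn_pdv hS hu k) hx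

lemma pdv_symm (hS : IsOpen S) (hu : ContDiffOn ℝ (⊤ : ℕ∞) u S) (hx : x ∈ S) (i j : Fin 2) :
    pdv i (pdv j u) x = pdv j (pdv i u) x := by
  have hda : DifferentiableAt ℝ (fderiv ℝ u) x := by
    have h1 : ContDiffOn ℝ (⊤ : ℕ∞) (fderivWithin ℝ u S) S :=
      hu.fderivWithin hS.uniqueDiffOn (by simp)
    have h2 : DifferentiableAt ℝ (fderivWithin ℝ u S) x := diffAt_of_contDiffOn hS h1 hx
    apply h2.congr_of_eventuallyEq
    filter_upwards [hS.mem_nhds hx] with y hy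
    rw [fderivWithin_of_isOpen hS hy]
  have key : ∀ p q : Fin 2, pdv p (pdv q u) x
      = fderiv ℝ (fderiv ℝ u) x (Pi.single p 1) (Pi.single q 1) := by
    intro p q
    have : pdv q u = fun y => (fderiv ℝ u y) (Pi.single q 1) := rfl
    rw [pdv, this, fderiv_clm_apply hda (differentiableAt_const _)]
    simp
  have hsymm : IsSymmSndFDerivAt ℝ u x :=
    (hu.contDiffAt (hS.mem_nhds hx)).isSymmSndFDerivAt (by norm_num; exact WithTop.coe_le_coe.2 le_top)
  rw [key, key, hsymm]

end aux2

section aux3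
variable (a b v : Fin 3 → ℝ)

lemma key_decomp :
    ((a ⨯₃ b) ⬝ᵥ (a ⨯₃ b)) • v
      = ((b ⬝ᵥ b) * (v ⬝ᵥ a) - (a ⬝ᵥ b) * (v ⬝ᵥ b)) • a
        + ((a ⬝ᵥ a) * (v ⬝ᵥ b) - (a ⬝ᵥ b) * (v ⬝ᵥ a)) • b
        + (v ⬝ᵥ (a ⨯₃ b)) • (a ⨯₃ b) := by
  funext c
  fin_cases c <;>
    simp [cross_apply, dotProduct, Fin.sum_univ_three] <;> ring

lemma lagrange_id : (a ⨯₃ b) ⬝ᵥ (a ⨯₃ b) = (a ⬝ᵥ a) * (b ⬝ᵥ b) - (a ⬝ᵥ b) * (a ⬝ᵥ b) := by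
  simp [cross_apply, dotProduct, Fin.sum_univ_three]; ring

lemma cross_ne_zero_of_li {a b : Fin 3 → ℝ} (hli : LinearIndependent ℝ ![a, b]) :
    a ⨯₃ b ≠ 0 := by
  intro h0
  have e1 : a 1 * b 2 - a 2 * b 1 = 0 := by
    have := congrFun h0 0; simpa [cross_apply] using this
  have e2 : a 2 * b 0 - a 0 * b 2 = 0 := by
    have := congrFun h0 1; simpa [cross_apply] using this
  have e3 : a 0 * b 1 - a 1 * b 0 = 0 := by
    have := congrFun h0 2; simpa [cross_apply] using this
  have key : ∀ p q : Fin 3, a p * b q = a q * b p := by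
    intro p q; fin_cases p <;> fin_cases q <;> simp <;> linarith
  rw [linearIndependent_fin2] at hli
  obtain ⟨hb, hs⟩ := hli
  obtain ⟨m, hm⟩ : ∃ m, b m ≠ 0 := by
    by_contra h; push_neg at h; exact hb (funext h)
  refine hs (a m / b m) (funext fun p => ?_)
  have := key p m
  simp
  field_simp
  linarith

lemma dot_self_pos {c : Fin 3 → ℝ} (hc : c ≠ 0) : 0 < c ⬝ᵥ c := by
  have h1 : 0 ≤ c ⬝ᵥ c := by
    simp only [dotProduct, Fin.sum_univ_three]
    nlinarith [mul_self_nonneg (c 0), mul_self_nonneg (c 1), mul_self_nonneg (c 2)]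
  rcases h1.lt_or_eq with h | h
  · exact h
  · exact absurd (dotProduct_self_eq_zero.1 h.symm) hc

end aux3

/-- Let `u` be a smooth immersion on an open `S ⊆ ℝ²` and let `Ω, τ` be smooth
with `∂_k τ = Ω × ∂_k u` on `S`. Then `Hess τ = dΩ × du + A ⊗ (Ω × n)`, i.e.
`∂ᵢ∂ⱼτ − Γ^k_{ij}∂_kτ = ∂ᵢΩ × ∂ⱼu + h_{ij}·(Ω × n)` on `S`. -/
theorem hess_of_bending_eq
    (S : Set (Fin 2 → ℝ)) (hS : IsOpen S)
    (u : (Fin 2 → ℝ) → (Fin 3 → ℝ)) (hu : ContDiffOn ℝ (⊤ : ℕ∞) u S)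
    (himm : ∀ x ∈ S, LinearIndependent ℝ ![pdv 0 u x, pdv 1 u x])
    (Ω τ : (Fin 2 → ℝ) → (Fin 3 → ℝ))
    (hΩ : ContDiffOn ℝ (⊤ : ℕ∞) Ω S) (hτ : ContDiffOn ℝ (⊤ : ℕ∞) τ S)
    (hbf : ∀ x ∈ S, ∀ k : Fin 2, pdv k τ x = Ω x ⨯₃ pdv k u x) :
    ∀ x ∈ S, ∀ i j : Fin 2,
      pdv i (pdv j τ) x - ∑ k, Gam u x k i j • pdv k τ x
        = pdv i Ω x ⨯₃ pdv j u x + sff u x i j • (Ω x ⨯₃ nrm u x) := by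
  intro x hx i j
  set a : Fin 3 → ℝ := pdv 0 u x with ha
  set b : Fin 3 → ℝ := pdv 1 u x with hb
  set v : Fin 3 → ℝ := pdv i (pdv j u) x with hv
  set c : Fin 3 → ℝ := a ⨯₃ b with hc
  have hcne : c ≠ 0 := cross_ne_zero_of_li (himm x hx)
  have hDpos : 0 < c ⬝ᵥ c := dot_self_pos hcne
  have hD : c ⬝ᵥ c ≠ 0 := ne_of_gt hDpos
  -- derivatives of the metric
  have hgd : ∀ m p q : Fin 2, pds m (fun y => gmat u y p q) x
      = pdv m (pdv p u) x ⬝ᵥ pdv q u x + pdv p u x ⬝ᵥ pdv m (pdv q u) x := by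
    intro m p q
    have : (fun y => gmat u y p q) = fun y => pdv p u y ⬝ᵥ pdv q u y := rfl
    rw [this, pds_dot (diffAt_pdv hS hu hx p) (diffAt_pdv hS hu hx q)]
  -- Christoffel symbols in terms of second derivatives
  have hGam : ∀ k : Fin 2, Gam u x k i j = ∑ l, ginv u x k l * (v ⬝ᵥ pdv l u x) := by
    intro k
    rw [Gam]
    rw [Finset.mul_sum]
    congr 1; funext l
    rw [hgd j i l, hgd i j l, hgd l i j, pdv_symm hS hu hx j i, pdv_symm hS hu hx l i,
      pdv_symm hS hu hx l j, dotProduct_comm (pdv j u x) (pdv i (pdv l u) x)]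
    ring
  -- the metric determinant
  have hdet : (gmat u x).det = c ⬝ᵥ c := by
    rw [Matrix.det_fin_two, lagrange_id]
    have h01 : gmat u x 0 1 = a ⬝ᵥ b := rfl
    have h10 : gmat u x 1 0 = a ⬝ᵥ b := show b ⬝ᵥ a = a ⬝ᵥ b from dotProduct_comm b a
    have h00 : gmat u x 0 0 = a ⬝ᵥ a := rfl
    have h11 : gmat u x 1 1 = b ⬝ᵥ b := rfl
    rw [h01, h10, h00, h11]
  -- inverse metric
  have hcomm : gmat u x 1 0 = a ⬝ᵥ b := show b ⬝ᵥ a = a ⬝ᵥ b from dotProduct_comm b a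
  have g00 : gmat u x 0 0 = a ⬝ᵥ a := rfl
  have g01 : gmat u x 0 1 = a ⬝ᵥ b := rfl
  have g11 : gmat u x 1 1 = b ⬝ᵥ b := rfl
  have hentry : ∀ k l : Fin 2, ginv u x k l
      = (c ⬝ᵥ c)⁻¹ * (!![b ⬝ᵥ b, -(a ⬝ᵥ b); -(a ⬝ᵥ b), a ⬝ᵥ a] k l) := by
    intro k l
    rw [ginv, Matrix.inv_def, hdet, Ring.inverse_eq_inv, Matrix.adjugate_fin_two,
      g00, g01, hcomm, g11, Matrix.smul_apply, smul_eq_mul]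
  have hG0 : Gam u x 0 i j
      = (c ⬝ᵥ c)⁻¹ * ((b ⬝ᵥ b) * (v ⬝ᵥ a) - (a ⬝ᵥ b) * (v ⬝ᵥ b)) := by
    rw [hGam 0, Fin.sum_univ_two, hentry 0 0, hentry 0 1]
    simp only [Matrix.of_apply, Matrix.cons_val', Matrix.cons_val_zero, Matrix.cons_val_one,
      Matrix.head_cons, Matrix.head_fin_const, Matrix.empty_val', Matrix.cons_val_fin_one]
    ring
  have hG1 : Gam u x 1 i j
      = (c ⬝ᵥ c)⁻¹ * ((a ⬝ᵥ a) * (v ⬝ᵥ b) - (a ⬝ᵥ b) * (v ⬝ᵥ a)) := by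
    rw [hGam 1, Fin.sum_univ_two, hentry 1 0, hentry 1 1]
    simp only [Matrix.of_apply, Matrix.cons_val', Matrix.cons_val_zero, Matrix.cons_val_one,
      Matrix.head_cons, Matrix.head_fin_const, Matrix.empty_val', Matrix.cons_val_fin_one]
    ring
  -- normal direction
  have hnn : (norm3 c)⁻¹ * (norm3 c)⁻¹ = (c ⬝ᵥ c)⁻¹ := by
    rw [norm3, ← mul_inv, Real.mul_self_sqrt hDpos.le]
  have hnrm : nrm u x = (norm3 c)⁻¹ • c := rfl
  have hsff : sff u x i j = (norm3 c)⁻¹ * (v ⬝ᵥ c) := by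
    rw [sff, hnrm, smul_dotProduct, smul_eq_mul, dotProduct_comm]
  have hsf : sff u x i j • nrm u x = ((c ⬝ᵥ c)⁻¹ * (v ⬝ᵥ c)) • c := by
    rw [hsff, hnrm, smul_smul]
    congr 1
    rw [← hnn]
    ring
  -- Gauss formula
  have hGauss : v = Gam u x 0 i j • a + Gam u x 1 i j • b + sff u x i j • nrm u x := by
    have hkd := key_decomp a b v
    rw [← hc] at hkd
    calc v = (c ⬝ᵥ c)⁻¹ • ((c ⬝ᵥ c) • v) := by
            rw [smul_smul, inv_mul_cancel₀ hD, one_smul]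
      _ = (c ⬝ᵥ c)⁻¹ • (((b ⬝ᵥ b) * (v ⬝ᵥ a) - (a ⬝ᵥ b) * (v ⬝ᵥ b)) • a
            + ((a ⬝ᵥ a) * (v ⬝ᵥ b) - (a ⬝ᵥ b) * (v ⬝ᵥ a)) • b + (v ⬝ᵥ c) • c) := by rw [hkd]
      _ = Gam u x 0 i j • a + Gam u x 1 i j • b + sff u x i j • nrm u x := by
            rw [hG0, hG1, hsf]
            simp [smul_add, smul_smul]
  -- differentiate the bending-field identity
  have hev : pdv j τ =ᶠ[nhds x] fun y => Ω y ⨯₃ pdv j u y := by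
    filter_upwards [hS.mem_nhds hx] with y hy using hbf y hy j
  have hstep1 : pdv i (pdv j τ) x = pdv i Ω x ⨯₃ pdv j u x + Ω x ⨯₃ v := by
    calc pdv i (pdv j τ) x = pdv i (fun y => Ω y ⨯₃ pdv j u y) x := by
          rw [pdv, pdv, hev.fderiv_eq]
      _ = pdv i Ω x ⨯₃ pdv j u x + Ω x ⨯₃ v :=
          pdv_cross (diffAt_of_contDiffOn hS hΩ hx) (diffAt_pdv hS hu hx j)
  rw [hstep1, Fin.sum_univ_two, hbf x hx 0, hbf x hx 1, hGauss]
  rw [← ha, ← hb]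
  simp only [LinearMap.map_add, LinearMap.map_smul]
  abel
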